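/- Under Assumption (A), there exist ε > 0 and C > 0 such that for every x ∈ 𝔹 with ‖x − x̄‖ ≤ ε and every Newton direction d at x, one has ‖d‖ ≤ C ‖x − x̄‖ and ‖x + d − x̄‖ ≤ C ‖x − x̄‖² (the Newton step is quadratically accurate before projection onto the sphere). -/

import Mathlib

open scoped RealInnerProductSpace

noncomputable section

/-- Euclidean space `ℝ^n`. -/
abbrev Euc (n : ℕ) : Type := EuclideanSpace ℝ (Fin n)

/-- An `m`-th order tensor on `ℝ^n`, viewed as a continuous `m`-multilinear form. -/
abbrev Tensor (m n : ℕ) : Type := ContinuousMultilinearMap ℝ (fun _ : Fin m => Euc n) ℝ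

/-- A tensor is symmetric if it is invariant under every permutation of its arguments. -/
def IsSymmTensor {m n : ℕ} (A : Tensor m n) : Prop :=
  ∀ (e : Equiv.Perm (Fin m)) (v : Fin m → Euc n), A (v ∘ e) = A v

/-- `A x^m`, the homogeneous form `A (x, …, x)`. -/
def tpow {m n : ℕ} (A : Tensor m n) (x : Euc n) : ℝ := A (fun _ => x)

/-- The last index of `Fin m`. -/
def lastIdx {m : ℕ} (_hm : 2 ≤ m) : Fin m := ⟨m - 1, by omega⟩

/-- The second to last index of `Fin m`. -/
def sndIdx {m : ℕ} (_hm : 2 ≤ m) : Fin m := ⟨m - 2, by omega⟩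

lemma sndIdx_ne_lastIdx {m : ℕ} (hm : 2 ≤ m) : sndIdx hm ≠ lastIdx hm := by
  simp only [sndIdx, lastIdx, Fin.mk.injEq, ne_eq]
  omega

/-- `A x^{m-1}`: the unique vector with `⟪A x^{m-1}, v⟫ = A (x, …, x, v)` for all `v`. -/
def tvec {m n : ℕ} (A : Tensor m n) (hm : 2 ≤ m) (x : Euc n) : Euc n :=
  (InnerProductSpace.toDual ℝ (Euc n)).symm
    (A.toContinuousLinearMap (fun _ => x) (lastIdx hm))

/-- `F(x) = A x^{m-1} - (A x^m) • x`. -/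
def Fvec {m n : ℕ} (A : Tensor m n) (hm : 2 ≤ m) (x : Euc n) : Euc n :=
  tvec A hm x - tpow A x • x

/-- `φ(x) = (1/m) A x^m`. -/
def phi {m n : ℕ} (A : Tensor m n) (x : Euc n) : ℝ := (1 / (m : ℝ)) * tpow A x

/-- Orthogonal projection `P_x d = d - ⟪x, d⟫ x` (for `x` a unit vector). -/
def Pproj {n : ℕ} (x d : Euc n) : Euc n := d - ⟪x, d⟫ • x

/-- `x(α) = (x + α d)/‖x + α d‖`, the projection of `x + α d` onto the unit sphere. -/
def xcur {n : ℕ} (x d : Euc n) (α : ℝ) : Euc n := ‖x + α • d‖⁻¹ • (x + α • d)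

/-- `w(x, d)`: the unique vector with `⟪w(x, d), v⟫ = A (x, …, x, d, v)` for all `v`. -/
def wvec {m n : ℕ} (A : Tensor m n) (hm : 2 ≤ m) (x d : Euc n) : Euc n :=
  (InnerProductSpace.toDual ℝ (Euc n)).symm
    (A.toContinuousLinearMap (Function.update (fun _ => x) (sndIdx hm) d) (lastIdx hm))

/-- `A (x, …, x, d, d)`. -/
def A2 {m n : ℕ} (A : Tensor m n) (hm : 2 ≤ m) (x d : Euc n) : ℝ :=
  A (Function.update (Function.update (fun _ => x) (sndIdx hm) d) (lastIdx hm) d)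

lemma wvec_add {m n : ℕ} (A : Tensor m n) (hm : 2 ≤ m) (x d₁ d₂ : Euc n) :
    wvec A hm x (d₁ + d₂) = wvec A hm x d₁ + wvec A hm x d₂ := by
  unfold wvec
  rw [← map_add]
  congr 1
  ext v
  simp only [ContinuousMultilinearMap.toContinuousLinearMap_apply, ContinuousLinearMap.add_apply]
  rw [Function.update_comm (sndIdx_ne_lastIdx hm), Function.update_comm (sndIdx_ne_lastIdx hm),
    Function.update_comm (sndIdx_ne_lastIdx hm)]
  exact A.map_update_add _ _ _ _

lemma wvec_smul {m n : ℕ} (A : Tensor m n) (hm : 2 ≤ m) (x : Euc n) (c : ℝ) (d : Euc n) :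
    wvec A hm x (c • d) = c • wvec A hm x d := by
  unfold wvec
  rw [← map_smul]
  congr 1
  ext v
  simp only [ContinuousMultilinearMap.toContinuousLinearMap_apply,
    ContinuousLinearMap.smul_apply, smul_eq_mul]
  rw [Function.update_comm (sndIdx_ne_lastIdx hm), Function.update_comm (sndIdx_ne_lastIdx hm)]
  exact A.map_update_smul _ _ _ _

/-- The Jacobian `F'(x) d = (m-1) w(x,d) - (A x^m) d - m ⟪A x^{m-1}, d⟫ x`. -/
def FderivL {m n : ℕ} (A : Tensor m n) (hm : 2 ≤ m) (x : Euc n) : Euc n →L[ℝ] Euc n :=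
  LinearMap.toContinuousLinearMap
  { toFun := fun d =>
      ((m : ℝ) - 1) • wvec A hm x d - tpow A x • d - ((m : ℝ) * ⟪tvec A hm x, d⟫) • x
    map_add' := by
      intro d₁ d₂
      try simp only
      rw [wvec_add, inner_add_right]
      module
    map_smul' := by
      intro c d
      simp only [RingHom.id_apply]
      rw [wvec_smul, inner_smul_right]
      module }

/-- A Newton direction at `x`: `⟪x, d⟫ = 0` and `P_x (F'(x) d + F(x)) = 0`. -/
def NewtonDir {m n : ℕ} (A : Tensor m n) (hm : 2 ≤ m) (x d : Euc n) : Prop :=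
  ⟪x, d⟫ = 0 ∧ Pproj x (FderivL A hm x d + Fvec A hm x) = 0

/-- The residual function `θ(x) = (1/2)‖F(x)‖²`. -/
def theta {m n : ℕ} (A : Tensor m n) (hm : 2 ≤ m) (x : Euc n) : ℝ :=
  (1 / 2) * ‖Fvec A hm x‖ ^ 2

/-- Assumption (A): second-order sufficient condition at the KKT point `x̄`. -/
def AssumpA {m n : ℕ} (A : Tensor m n) (hm : 2 ≤ m) (xb : Euc n) (lam : ℝ) : Prop :=
  ‖xb‖ = 1 ∧ tvec A hm xb = lam • xb ∧ lam = tpow A xb ∧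
    ∀ d : Euc n, d ≠ 0 → ⟪xb, d⟫ = 0 →
      0 < ((m : ℝ) - 1) * A2 A hm xb d - lam * ‖d‖ ^ 2

end

/-!
Since `A` is symmetric, `F` is smooth with derivative `F′(x) = FderivL A hm x`, and `F(x̄) = 0`.
The second-order sufficient condition at `x̄` propagates, by compactness of the unit sphere, to a
uniform bound `⟪F′(x) t, t⟫ ≥ c ‖t‖²` for `t ⊥ x` and `x` near `x̄`. Testing the Newton equation
against `d` gives `c ‖d‖ ≤ ‖F(x)‖ = O(‖x - x̄‖)`. For the step error `u = x + d - x̄`, the normal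
component `⟪x, u⟫ = ‖x - x̄‖² / 2` is already quadratic, and testing the Newton equation against the
tangential component `t` bounds `c ‖t‖` by `‖F(x) - F′(x) (x - x̄)‖ + O(‖x - x̄‖²)`, which is
quadratic by Taylor's theorem because `F(x̄) = 0`.
-/

open Filter Topology Metric

section FiniteDimensionalInner

variable {E F : Type*} [NormedAddCommGroup E] [NormedSpace ℝ E]
  [NormedAddCommGroup F] [InnerProductSpace ℝ F] [FiniteDimensional ℝ F]

theorem hasFDerivAt_of_forall_hasFDerivAt_inner {f : E → F} {f' : E →L[ℝ] F} {x : E}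
    (h : ∀ v, HasFDerivAt (fun y => ⟪f y, v⟫) ((innerSL ℝ v).comp f') x) :
    HasFDerivAt f f' x := by
  set b := stdOrthonormalBasis ℝ F
  have H := HasFDerivAt.fun_sum (u := Finset.univ) fun j _ => (h (b j)).smul_const (b j)
  simp only [← real_inner_comm (f _), b.sum_repr'] at H
  refine H.congr_fderiv (ContinuousLinearMap.ext fun e => ?_)
  simp [b.sum_repr']

theorem contDiff_of_forall_contDiff_inner {f : E → F} {k : WithTop ℕ∞}
    (h : ∀ v, ContDiff ℝ k fun y => ⟪f y, v⟫) : ContDiff ℝ k f := by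
  set b := stdOrthonormalBasis ℝ F
  have hf : f = fun y => ∑ j, ⟪f y, b j⟫ • b j := by
    simp only [← real_inner_comm (f _), b.sum_repr']
  rw [hf]
  exact ContDiff.sum fun j _ => (h (b j)).smul contDiff_const

end FiniteDimensionalInner

theorem ContDiffAt.isBigO_sub_sub_fderiv {E F : Type*} [NormedAddCommGroup E] [NormedSpace ℝ E]
    [NormedAddCommGroup F] [NormedSpace ℝ F] {f : E → F} {x₀ : E} (hf : ContDiffAt ℝ 2 f x₀) :
    (fun x => f x - f x₀ - fderiv ℝ f x (x - x₀)) =O[𝓝 x₀] fun x => ‖x - x₀‖ ^ 2 := by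
  obtain ⟨K, t, ht, hK⟩ := (hf.fderiv_right (m := 1) le_rfl).exists_lipschitzOnWith
  have hdiff := (hf.eventually (by simp)).mono fun y hy => hy.differentiableAt two_ne_zero
  obtain ⟨δ, hδ, hball⟩ := eventually_nhds_iff_ball.1 (inter_mem ht hdiff)
  refine Asymptotics.IsBigO.of_bound K ?_
  filter_upwards [ball_mem_nhds x₀ hδ] with x hx
  have hseg : segment ℝ x x₀ ⊆ ball x₀ δ :=
    (convex_ball x₀ δ).segment_subset hx (mem_ball_self hδ)
  have hderiv : ∀ y ∈ segment ℝ x x₀, HasFDerivWithinAt (fun y => f y - fderiv ℝ f x y)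
      (fderiv ℝ f y - fderiv ℝ f x) (segment ℝ x x₀) y := fun y hy =>
    ((hball y (hseg hy)).2.hasFDerivAt.sub (fderiv ℝ f x).hasFDerivAt).hasFDerivWithinAt
  have hbound : ∀ y ∈ segment ℝ x x₀, ‖fderiv ℝ f y - fderiv ℝ f x‖ ≤ K * ‖x - x₀‖ := by
    intro y hy
    calc ‖fderiv ℝ f y - fderiv ℝ f x‖ ≤ K * ‖y - x‖ := by
          simpa only [dist_eq_norm] using
            hK.dist_le_mul y (hball y (hseg hy)).1 x (hball x hx).1
      _ ≤ K * ‖x - x₀‖ := by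
          gcongr
          simpa only [norm_sub_rev x₀ x] using norm_sub_le_of_mem_segment hy
  have := (convex_segment x x₀).norm_image_sub_le_of_norm_hasFDerivWithin_le hderiv hbound
    (left_mem_segment ℝ x x₀) (right_mem_segment ℝ x x₀)
  calc ‖f x - f x₀ - fderiv ℝ f x (x - x₀)‖
      = ‖f x₀ - fderiv ℝ f x x₀ - (f x - fderiv ℝ f x x)‖ := by
        rw [← norm_neg, map_sub]
        congr 1
        abel
    _ ≤ K * ‖x - x₀‖ * ‖x₀ - x‖ := this
    _ = K * ‖‖x - x₀‖ ^ 2‖ := by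
        rw [norm_sub_rev x₀ x, norm_pow, norm_norm]
        ring

theorem exists_pos_eventually_mul_norm_sq_le {X E : Type*} [TopologicalSpace X]
    [NormedAddCommGroup E] [NormedSpace ℝ E] [ProperSpace E] {q : X → E → ℝ}
    (hq : Continuous (Function.uncurry q)) (hhom : ∀ x (r : ℝ) t, q x (r • t) = r ^ 2 * q x t)
    {x₀ : X} (hpos : ∀ t ≠ 0, 0 < q x₀ t) :
    ∃ c > 0, ∀ᶠ x in 𝓝 x₀, ∀ t, c * ‖t‖ ^ 2 ≤ q x t := by
  have hsphere : ∀ t ∈ sphere (0 : E) 1, 0 < q x₀ t := fun t ht =>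
    hpos t (ne_zero_of_mem_unit_sphere ⟨t, ht⟩)
  obtain ⟨c', hc', hc'le⟩ := (isCompact_sphere (0 : E) 1).exists_forall_le'
    (hq.comp (Continuous.prodMk_right x₀)).continuousOn hsphere
  refine ⟨c' / 2, half_pos hc', ?_⟩
  have hnear : ∀ t ∈ sphere (0 : E) 1, ∀ᶠ z : X × E in 𝓝 (x₀, t), c' / 2 < q z.1 z.2 :=
    fun t ht => (hq.tendsto (x₀, t)).eventually (lt_mem_nhds (by
      simpa using (half_lt_self hc').trans_le (hc'le t ht)))
  filter_upwards [(isCompact_sphere (0 : E) 1).eventually_forall_of_forall_eventually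
    (P := fun x t => c' / 2 < q x t) hnear] with x hx t
  rcases eq_or_ne t 0 with rfl | ht
  · simpa using (hhom x 0 0).ge
  · have hunit : ‖t‖⁻¹ • t ∈ sphere (0 : E) 1 := by
      simp [norm_smul, ht]
    have hscale : q x t = ‖t‖ ^ 2 * q x (‖t‖⁻¹ • t) := by
      rw [hhom, ← mul_assoc, ← mul_pow, mul_inv_cancel₀ (norm_ne_zero_iff.2 ht), one_pow,
        one_mul]
    rw [hscale, mul_comm]
    exact mul_le_mul_of_nonneg_left (hx _ hunit).le (by positivity)

theorem mul_le_of_mul_sq_le_mul {a c r : ℝ} (hr : 0 ≤ r) (ha : 0 ≤ a) (h : c * r ^ 2 ≤ a * r) :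
    c * r ≤ a := by
  rcases hr.eq_or_lt with rfl | hr
  · simpa using ha
  · exact le_of_mul_le_mul_right (by nlinarith) hr

section Newton

variable {E : Type*} [NormedAddCommGroup E] [InnerProductSpace ℝ E] {J : E →L[ℝ] E}
  {c : ℝ} {x xb d v : E}

theorem mul_norm_le_norm_of_newton (hcoer : c * ‖d‖ ^ 2 ≤ ⟪J d, d⟫) (hd : ⟪x, d⟫ = 0)
    (hN : ∀ t, ⟪x, t⟫ = 0 → ⟪J d + v, t⟫ = 0) : c * ‖d‖ ≤ ‖v‖ := by
  refine mul_le_of_mul_sq_le_mul (norm_nonneg d) (norm_nonneg v) ?_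
  have hJd : ⟪J d, d⟫ = -⟪v, d⟫ := by
    linarith [inner_add_left (𝕜 := ℝ) (J d) v d ▸ hN d hd]
  calc c * ‖d‖ ^ 2 ≤ -⟪v, d⟫ := hJd ▸ hcoer
    _ ≤ ‖v‖ * ‖d‖ := by
      rw [← inner_neg_left, ← norm_neg v]
      exact real_inner_le_norm _ _

theorem mul_norm_add_sub_le_of_newton (hc : 0 ≤ c) (hx : ‖x‖ = 1) (hxb : ‖xb‖ = 1)
    (hcoer : ∀ t, ⟪x, t⟫ = 0 → c * ‖t‖ ^ 2 ≤ ⟪J t, t⟫) (hd : ⟪x, d⟫ = 0)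
    (hN : ∀ t, ⟪x, t⟫ = 0 → ⟪J d + v, t⟫ = 0) :
    c * ‖x + d - xb‖ ≤ ‖v - J (x - xb)‖ + (‖J‖ + c) / 2 * ‖x - xb‖ ^ 2 := by
  set e := ‖x - xb‖
  have hxe : ⟪x, x - xb⟫ = e ^ 2 / 2 := by
    rw [norm_sub_sq_real, hx, hxb, inner_sub_right, real_inner_self_eq_norm_sq, hx]
    ring
  -- the tangential part of the step error; its normal part is `(e²/2) • x`
  set t := d + (x - xb) - (e ^ 2 / 2) • x
  have ht : ⟪x, t⟫ = 0 := by
    rw [inner_sub_right, inner_add_right, hd, hxe, real_inner_smul_right,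
      real_inner_self_eq_norm_sq, hx]
    ring
  have hJt : ⟪J t, t⟫ = -⟪v - J (x - xb), t⟫ - e ^ 2 / 2 * ⟪J x, t⟫ := by
    have := hN t ht
    simp only [t, map_sub, map_add, map_smul, inner_sub_left, inner_add_left,
      real_inner_smul_left] at this ⊢
    linarith
  have hJx : ‖J x‖ ≤ ‖J‖ := by simpa [hx] using J.le_opNorm x
  have hct : c * ‖t‖ ≤ ‖v - J (x - xb)‖ + ‖J‖ / 2 * e ^ 2 := by
    refine mul_le_of_mul_sq_le_mul (norm_nonneg t) (by positivity) ?_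
    calc c * ‖t‖ ^ 2 ≤ ⟪J t, t⟫ := hcoer t ht
      _ ≤ ‖v - J (x - xb)‖ * ‖t‖ + e ^ 2 / 2 * (‖J‖ * ‖t‖) := by
        rw [hJt]
        have h₁ := abs_real_inner_le_norm (v - J (x - xb)) t
        have h₂ := (abs_real_inner_le_norm (J x) t).trans
          (mul_le_mul_of_nonneg_right hJx (norm_nonneg t))
        have h₃ : 0 ≤ e ^ 2 / 2 := by positivity
        nlinarith [neg_abs_le ⟪v - J (x - xb), t⟫, neg_abs_le ⟪J x, t⟫]
      _ = (‖v - J (x - xb)‖ + ‖J‖ / 2 * e ^ 2) * ‖t‖ := by ring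
  have hstep : ‖x + d - xb‖ ≤ ‖t‖ + e ^ 2 / 2 := by
    calc ‖x + d - xb‖ = ‖t + (e ^ 2 / 2) • x‖ := by
          congr 1
          simp only [t]
          abel
      _ ≤ ‖t‖ + e ^ 2 / 2 := by
          refine (norm_add_le _ _).trans_eq ?_
          rw [norm_smul, hx, mul_one, Real.norm_of_nonneg (by positivity)]
  nlinarith [mul_le_mul_of_nonneg_left hstep hc]

end Newton

section Projection

variable {n : ℕ} {x t v : Euc n}

theorem Pproj_smul (r : ℝ) : Pproj x (r • t) = r • Pproj x t := by
  simp only [Pproj, inner_smul_right, smul_sub, smul_smul]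

theorem inner_Pproj_self (hx : ‖x‖ = 1) (t : Euc n) : ⟪x, Pproj x t⟫ = 0 := by
  rw [Pproj, inner_sub_right, real_inner_smul_right, real_inner_self_eq_norm_sq, hx]
  ring

theorem Pproj_of_inner_eq_zero (ht : ⟪x, t⟫ = 0) : Pproj x t = t := by
  rw [Pproj, ht, zero_smul, sub_zero]

theorem inner_eq_zero_of_Pproj_eq_zero (hv : Pproj x v = 0) (ht : ⟪x, t⟫ = 0) : ⟪v, t⟫ = 0 := by
  rw [Pproj, sub_eq_zero] at hv
  rw [hv, real_inner_smul_left, ht, mul_zero]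

end Projection

section Tensor

open Function

variable {m n : ℕ} {A : Tensor m n}

theorem IsSymmTensor.apply_update_const (hA : IsSymmTensor A) (x d : Euc n) (i j : Fin m) :
    A (update (fun _ => x) i d) = A (update (fun _ => x) j d) := by
  rw [← hA (Equiv.swap i j) (update (fun _ => x) j d), update_comp_equiv]
  simp only [Equiv.symm_swap, Equiv.swap_apply_right]
  rfl

theorem IsSymmTensor.apply_update_update (hA : IsSymmTensor A) (x d v : Euc n)
    {i j k : Fin m} (hi : i ≠ k) (hj : j ≠ k) :
    A (update (update (fun _ => x) i d) k v) = A (update (update (fun _ => x) j d) k v) := by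
  rw [← hA (Equiv.swap i j) (update (update (fun _ => x) j d) k v), update_comp_equiv,
    update_comp_equiv]
  simp only [Equiv.symm_swap, Equiv.swap_apply_right, Equiv.swap_apply_of_ne_of_ne hi.symm hj.symm]
  rfl

variable (A) (hm : 2 ≤ m)

theorem inner_tvec (x v : Euc n) : ⟪tvec A hm x, v⟫ = A (update (fun _ => x) (lastIdx hm) v) := by
  simp [tvec, InnerProductSpace.toDual_symm_apply]

theorem inner_wvec (x d v : Euc n) :
    ⟪wvec A hm x d, v⟫ = A (update (update (fun _ => x) (sndIdx hm) d) (lastIdx hm) v) := by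
  simp [wvec, InnerProductSpace.toDual_symm_apply]

noncomputable def wvecL (x : Euc n) : Euc n →L[ℝ] Euc n :=
  LinearMap.toContinuousLinearMap
    { toFun := wvec A hm x
      map_add' := wvec_add A hm x
      map_smul' := wvec_smul A hm x }

@[simp] theorem wvecL_apply (x d : Euc n) : wvecL A hm x d = wvec A hm x d := rfl

theorem FderivL_apply (x d : Euc n) :
    FderivL A hm x d
      = ((m : ℝ) - 1) • wvec A hm x d - tpow A x • d - ((m : ℝ) * ⟪tvec A hm x, d⟫) • x := rfl

variable {A}

theorem hasFDerivAt_tpow (hA : IsSymmTensor A) (x : Euc n) :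
    HasFDerivAt (tpow A) ((m : ℝ) • innerSL ℝ (tvec A hm x)) x := by
  refine (HasFDerivAt.multilinear_comp A (g := fun _ y => y) fun _ => hasFDerivAt_id (𝕜 := ℝ) x
    ).congr_fderiv (ContinuousLinearMap.ext fun e => ?_)
  simp [hA.apply_update_const x e _ (lastIdx hm), inner_tvec]

theorem hasFDerivAt_apply_update_last (hA : IsSymmTensor A) (x v : Euc n) :
    HasFDerivAt (fun y => A (update (fun _ => y) (lastIdx hm) v))
      (((m : ℝ) - 1) • (innerSL ℝ v).comp (wvecL A hm x)) x := by
  classical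
  let g' : Fin m → Euc n →L[ℝ] Euc n :=
    update (fun _ => ContinuousLinearMap.id ℝ _) (lastIdx hm) 0
  have hg : ∀ i, HasFDerivAt (fun y : Euc n => update (fun _ => y) (lastIdx hm) v i) (g' i) x := by
    intro i
    rcases eq_or_ne i (lastIdx hm) with rfl | hi
    · simpa [g'] using hasFDerivAt_const v x
    · simp only [g', update_of_ne hi]
      exact hasFDerivAt_id x
  refine (HasFDerivAt.multilinear_comp A hg).congr_fderiv (ContinuousLinearMap.ext fun e => ?_)
  -- the last slot holds the constant `v`; by symmetry each other slot contributes `⟪w(x, e), v⟫`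
  have hterm : ∀ i ∈ Finset.univ.erase (lastIdx hm),
      ((A.toContinuousLinearMap (fun j => update (fun _ => x) (lastIdx hm) v j) i).comp (g' i)) e
        = ⟪wvec A hm x e, v⟫ := by
    intro i hi
    rw [Finset.mem_erase] at hi
    simp only [g', ContinuousLinearMap.comp_apply, update_of_ne hi.1,
      ContinuousLinearMap.id_apply, ContinuousMultilinearMap.toContinuousLinearMap_apply]
    rw [update_comm hi.1.symm, hA.apply_update_update x e v hi.1 (sndIdx_ne_lastIdx hm),
      inner_wvec]
  rw [sum_apply, ← Finset.add_sum_erase _ _ (Finset.mem_univ (lastIdx hm)),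
    Finset.sum_congr rfl hterm]
  simp [g', Finset.card_erase_of_mem, Nat.cast_sub (one_le_two.trans hm), real_inner_comm]

theorem hasFDerivAt_tvec (hA : IsSymmTensor A) (x : Euc n) :
    HasFDerivAt (tvec A hm) (((m : ℝ) - 1) • wvecL A hm x) x := by
  refine hasFDerivAt_of_forall_hasFDerivAt_inner fun v => ?_
  simp only [inner_tvec, ContinuousLinearMap.comp_smul]
  exact hasFDerivAt_apply_update_last hm hA x v

theorem hasFDerivAt_Fvec (hA : IsSymmTensor A) (x : Euc n) :
    HasFDerivAt (Fvec A hm) (FderivL A hm x) x := by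
  refine ((hasFDerivAt_tvec hm hA x).sub ((hasFDerivAt_tpow hm hA x).smul
    (hasFDerivAt_id x))).congr_fderiv (ContinuousLinearMap.ext fun e => ?_)
  simp only [sub_apply, add_apply, smul_apply, ContinuousLinearMap.smulRight_apply,
    ContinuousLinearMap.id_apply, innerSL_apply_apply, wvecL_apply, FderivL_apply, smul_eq_mul, id]
  module

theorem fderiv_Fvec (hA : IsSymmTensor A) : fderiv ℝ (Fvec A hm) = FderivL A hm :=
  funext fun x => (hasFDerivAt_Fvec hm hA x).fderiv

variable (A) in
theorem contDiff_Fvec {k : WithTop ℕ∞} : ContDiff ℝ k (Fvec A hm) := by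
  have hupdate : ∀ v : Euc n, ContDiff ℝ k fun y : Euc n => update (fun _ => y) (lastIdx hm) v :=
    fun v => contDiff_pi.2 fun i => by
      rcases eq_or_ne i (lastIdx hm) with rfl | hi
      · simpa using contDiff_const
      · simp only [update_of_ne hi]
        exact contDiff_id
  have htvec : ContDiff ℝ k (tvec A hm) := contDiff_of_forall_contDiff_inner fun v => by
    simp only [inner_tvec]
    exact A.contDiff.comp (hupdate v)
  have htpow : ContDiff ℝ k (tpow A) := A.contDiff.comp (contDiff_pi.2 fun _ => contDiff_id)
  exact htvec.sub (htpow.smul contDiff_id)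

theorem continuous_FderivL (hA : IsSymmTensor A) : Continuous (FderivL A hm) :=
  fderiv_Fvec hm hA ▸ (contDiff_Fvec A hm (k := 1)).continuous_fderiv one_ne_zero

variable (A) in
theorem inner_FderivL_self {x t : Euc n} (ht : ⟪x, t⟫ = 0) :
    ⟪FderivL A hm x t, t⟫ = ((m : ℝ) - 1) * A2 A hm x t - tpow A x * ‖t‖ ^ 2 := by
  rw [FderivL_apply, inner_sub_left, inner_sub_left, real_inner_smul_left,
    real_inner_smul_left, real_inner_smul_left, ht, real_inner_self_eq_norm_sq, inner_wvec,
    mul_zero, sub_zero]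
  rfl

theorem Fvec_eq_zero {xb : Euc n} {lam : ℝ} (hAss : AssumpA A hm xb lam) : Fvec A hm xb = 0 := by
  obtain ⟨-, heig, hlam, -⟩ := hAss
  rw [Fvec, heig, hlam, sub_self]

theorem exists_pos_eventually_coercive_FderivL (hA : IsSymmTensor A) {xb : Euc n} {lam : ℝ}
    (hAss : AssumpA A hm xb lam) :
    ∃ c > 0, ∀ᶠ x in 𝓝 xb, ∀ t, ⟪x, t⟫ = 0 → c * ‖t‖ ^ 2 ≤ ⟪FderivL A hm x t, t⟫ := by
  obtain ⟨hxb, -, hlam, hsosc⟩ := hAss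
  -- `q x` is the Hessian form on the tangent space at `x`, and the square term makes `q xb`
  -- positive definite on the whole space, so that compactness of the sphere applies
  let q : Euc n → Euc n → ℝ := fun x t => ⟪FderivL A hm x (Pproj x t), Pproj x t⟫ + ⟪x, t⟫ ^ 2
  have hq : Continuous (uncurry q) := by
    have hP : Continuous fun p : Euc n × Euc n => Pproj p.1 p.2 :=
      continuous_snd.sub ((continuous_fst.inner continuous_snd).fun_smul continuous_fst)
    exact ((((continuous_FderivL hm hA).comp continuous_fst).clm_apply hP).inner hP).add
      ((continuous_fst.inner continuous_snd).pow 2)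
  have hhom : ∀ x (r : ℝ) t, q x (r • t) = r ^ 2 * q x t := by
    intro x r t
    simp only [q, Pproj_smul, map_smul, real_inner_smul_left, real_inner_smul_right]
    ring
  have hpos : ∀ t ≠ 0, 0 < q xb t := by
    intro t ht
    have hnormal := inner_Pproj_self hxb t
    rcases eq_or_ne (Pproj xb t) 0 with hp | hp
    · have : ⟪xb, t⟫ ≠ 0 := fun h => ht (by simpa [Pproj, h] using hp)
      simp only [q, hp, map_zero, inner_zero_left, zero_add]
      positivity
    · have := hsosc _ hp hnormal
      simp only [q, inner_FderivL_self A hm hnormal, ← hlam]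
      positivity
  obtain ⟨c, hc, hev⟩ := exists_pos_eventually_mul_norm_sq_le hq hhom hpos
  refine ⟨c, hc, hev.mono fun x hx t ht => ?_⟩
  simpa [q, Pproj_of_inner_eq_zero ht, ht] using hx t

end Tensor

theorem stmt8_general {m n : ℕ} (hm : 2 ≤ m) (A : Tensor m n) (hA : IsSymmTensor A)
    (xb : Euc n) (lam : ℝ) (hAss : AssumpA A hm xb lam) :
    ∃ ε > 0, ∃ C > 0, ∀ x : Euc n, ‖x‖ = 1 → ‖x - xb‖ ≤ ε →
      ∀ d : Euc n, NewtonDir A hm x d →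
        ‖d‖ ≤ C * ‖x - xb‖ ∧ ‖x + d - xb‖ ≤ C * ‖x - xb‖ ^ 2 := by
  have hF0 := Fvec_eq_zero hm hAss
  obtain ⟨c, hc, hcoer⟩ := exists_pos_eventually_coercive_FderivL hm hA hAss
  obtain ⟨L, hL, hLip⟩ := (hasFDerivAt_Fvec hm hA xb).isBigO_sub.exists_pos
  obtain ⟨K, hK, hTaylor⟩ :=
    ((contDiff_Fvec A hm).contDiffAt (x := xb)).isBigO_sub_sub_fderiv.exists_pos
  have hM := ((continuous_FderivL hm hA).norm.tendsto xb).eventually_lt_const (lt_add_one _)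
  obtain ⟨ε, hε, hnear⟩ := Metric.eventually_nhds_iff.1
    (hcoer.and (hLip.bound.and (hTaylor.bound.and hM)))
  refine ⟨ε / 2, half_pos hε, (L + K + (‖FderivL A hm xb‖ + 1) + c) / c, by positivity, ?_⟩
  rintro x hx hxε d ⟨hxd, hN⟩
  obtain ⟨hcx, hLx, hKx, hMx⟩ := hnear (y := x) (by rw [dist_eq_norm]; linarith)
  rw [hF0, sub_zero] at hLx
  rw [hF0, sub_zero, fderiv_Fvec hm hA, norm_pow, norm_norm] at hKx
  have hN' := fun t => inner_eq_zero_of_Pproj_eq_zero (t := t) hN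
  have hd := mul_norm_le_norm_of_newton (hcx d hxd) hxd hN'
  have hstep := mul_norm_add_sub_le_of_newton hc.le hx hAss.1 hcx hxd hN'
  rw [div_mul_eq_mul_div, div_mul_eq_mul_div, le_div_iff₀ hc, le_div_iff₀ hc]
  have he := norm_nonneg (x - xb)
  have hJ := norm_nonneg (FderivL A hm xb)
  constructor <;> nlinarith [mul_nonneg he hJ, mul_nonneg (sq_nonneg ‖x - xb‖) hJ]

/-- under Assumption (A), the Newton step is quadratically accurate before
projection onto the sphere. -/
theorem stmt8 {m n : ℕ} (hn : 1 ≤ n) (hm : 2 ≤ m) (A : Tensor m n) (hA : IsSymmTensor A)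
    (xb : Euc n) (lam : ℝ) (hAss : AssumpA A hm xb lam) :
    ∃ ε > 0, ∃ C > 0, ∀ x : Euc n, ‖x‖ = 1 → ‖x - xb‖ ≤ ε →
      ∀ d : Euc n, NewtonDir A hm x d →
        ‖d‖ ≤ C * ‖x - xb‖ ∧ ‖x + d - xb‖ ≤ C * ‖x - xb‖ ^ 2 :=
  stmt8_general hm A hA xb lam hAss
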